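/- Let n ≥ 1 and let h₁, h₂ ∈ ℂ^n be nonzero vectors. Then the supremum of |h₂ᴴWh₁|² / (‖Wᴴh₂‖² + 1) over all matrices W ∈ ℂ^{n×n} satisfying ‖Wh₁‖² + ‖W‖_F² = 1 equals ‖h₁‖²‖h₂‖² / (1 + ‖h₁‖² + ‖h₂‖²), and this supremum is attained by the rank-one matrix W = (1 + ‖h₁‖²)^{-1/2} · ĥ₂ĥ₁ᴴ, where ĥ₁ = h₁/‖h₁‖ and ĥ₂ = h₂/‖h₂‖. -/

import Mathlib

/-!
Write `a = ‖h₁‖²`, `b = ‖h₂‖²`. Cauchy–Schwarz gives `|h₂ᴴWh₁|² ≤ b‖Wh₁‖²` and, moving `W`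
across, `|h₂ᴴWh₁|² ≤ ‖Wᴴh₂‖² a`; Cauchy–Schwarz row by row gives `‖Wh₁‖² ≤ ‖W‖_F² a`, which under
the power constraint reads `‖Wh₁‖²(1 + a) ≤ a`. Weighting the first bound by `1 + a`, the second
by `b` and adding yields `|h₂ᴴWh₁|²(1 + a + b) ≤ ab(‖Wᴴh₂‖² + 1)`. The rank-one matrix `c ĥ₂ĥ₁ᴴ`
turns all three inequalities into equalities, and the power constraint forces `|c|² = 1/(1 + a)`.
-/

noncomputable def cnorm {k : ℕ} (v : Fin k → ℂ) : ℝ :=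
  Real.sqrt (∑ i, ‖v i‖ ^ 2)

noncomputable def frobSq {p q : ℕ} (A : Matrix (Fin p) (Fin q) ℂ) : ℝ :=
  ∑ i, ∑ j, ‖A i j‖ ^ 2

open Matrix

section

variable {p q : ℕ}

lemma cnorm_eq_norm_toLp (v : Fin q → ℂ) : cnorm v = ‖WithLp.toLp 2 v‖ := by
  rw [EuclideanSpace.norm_eq]; rfl

lemma cnorm_sq_eq_sum (v : Fin q → ℂ) : cnorm v ^ 2 = ∑ i, ‖v i‖ ^ 2 :=
  Real.sq_sqrt (Finset.sum_nonneg fun _ _ => sq_nonneg _)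

lemma cnorm_nonneg (v : Fin q → ℂ) : 0 ≤ cnorm v := Real.sqrt_nonneg _

lemma cnorm_pos {v : Fin q → ℂ} (hv : v ≠ 0) : 0 < cnorm v := by
  rw [cnorm_eq_norm_toLp]
  exact norm_pos_iff.2 fun h => hv (by simpa using congrArg WithLp.ofLp h)

lemma cnorm_smul (c : ℂ) (v : Fin q → ℂ) : cnorm (c • v) = ‖c‖ * cnorm v := by
  simp only [cnorm_eq_norm_toLp, WithLp.toLp_smul, norm_smul]

lemma cnorm_star (v : Fin q → ℂ) : cnorm (star v) = cnorm v := by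
  simp only [cnorm, Pi.star_apply, norm_star]

lemma star_dotProduct_self (v : Fin q → ℂ) : star v ⬝ᵥ v = ((cnorm v ^ 2 : ℝ) : ℂ) := by
  rw [dotProduct_comm, ← EuclideanSpace.inner_toLp_toLp, inner_self_eq_norm_sq_to_K,
    cnorm_eq_norm_toLp]
  push_cast; rfl

lemma norm_star_dotProduct_le (u v : Fin q → ℂ) : ‖star u ⬝ᵥ v‖ ≤ cnorm u * cnorm v := by
  rw [cnorm_eq_norm_toLp, cnorm_eq_norm_toLp, dotProduct_comm, ← EuclideanSpace.inner_toLp_toLp]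
  exact norm_inner_le_norm _ _

lemma cnorm_mulVec_sq_le (W : Matrix (Fin p) (Fin q) ℂ) (v : Fin q → ℂ) :
    cnorm (W *ᵥ v) ^ 2 ≤ frobSq W * cnorm v ^ 2 := by
  rw [cnorm_sq_eq_sum, frobSq, Finset.sum_mul]
  refine Finset.sum_le_sum fun i _ => ?_
  calc ‖(W *ᵥ v) i‖ ^ 2 = ‖star (star (W i)) ⬝ᵥ v‖ ^ 2 := by rw [star_star]; rfl
    _ ≤ (cnorm (star (W i)) * cnorm v) ^ 2 := by
      gcongr; exact norm_star_dotProduct_le _ _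
    _ = _ := by rw [mul_pow, cnorm_star, cnorm_sq_eq_sum, cnorm_sq_eq_sum]

lemma smul_vecMulVec_star_mulVec (c : ℂ) (x : Fin p → ℂ) (y v : Fin q → ℂ) :
    (c • vecMulVec x (star y)) *ᵥ v = (c * (star y ⬝ᵥ v)) • x := by
  rw [smul_mulVec, vecMulVec_mulVec, op_smul_eq_smul, smul_smul]

lemma conjTranspose_smul_vecMulVec_star (c : ℂ) (x : Fin p → ℂ) (y : Fin q → ℂ) :
    (c • vecMulVec x (star y))ᴴ = star c • vecMulVec y (star x) := by
  rw [conjTranspose_smul, conjTranspose_vecMulVec, star_star]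

lemma frobSq_smul_vecMulVec (c : ℂ) (x : Fin p → ℂ) (y : Fin q → ℂ) :
    frobSq (c • vecMulVec x y) = ‖c‖ ^ 2 * cnorm x ^ 2 * cnorm y ^ 2 := by
  rw [frobSq, cnorm_sq_eq_sum, cnorm_sq_eq_sum, mul_assoc, Fintype.sum_mul_sum, Finset.mul_sum]
  refine Finset.sum_congr rfl fun i _ => ?_
  rw [Finset.mul_sum]
  refine Finset.sum_congr rfl fun j _ => ?_
  rw [Matrix.smul_apply, vecMulVec_apply, smul_eq_mul, norm_mul, norm_mul, mul_pow, mul_pow]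

lemma cnorm_inv_smul_self {v : Fin q → ℂ} (hv : v ≠ 0) : cnorm ((cnorm v : ℂ)⁻¹ • v) = 1 := by
  rw [cnorm_smul, norm_inv, Complex.norm_real, Real.norm_of_nonneg (cnorm_nonneg v),
    inv_mul_cancel₀ (cnorm_pos hv).ne']

lemma star_dotProduct_inv_smul_self (v : Fin q → ℂ) :
    star v ⬝ᵥ ((cnorm v : ℂ)⁻¹ • v) = cnorm v := by
  rw [dotProduct_smul, star_dotProduct_self, smul_eq_mul, Complex.ofReal_pow, sq, ← mul_assoc,
    inv_mul_mul_self]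

lemma star_inv_smul_self_dotProduct (v : Fin q → ℂ) :
    star ((cnorm v : ℂ)⁻¹ • v) ⬝ᵥ v = cnorm v := by
  rw [star_smul, smul_dotProduct, star_dotProduct_self, star_inv₀, Complex.star_def,
    Complex.conj_ofReal, smul_eq_mul, Complex.ofReal_pow, sq, ← mul_assoc, inv_mul_mul_self]

noncomputable def relayPower (W : Matrix (Fin p) (Fin q) ℂ) (h₁ : Fin q → ℂ) : ℝ :=
  cnorm (W *ᵥ h₁) ^ 2 + frobSq W

noncomputable def relaySNR (W : Matrix (Fin p) (Fin q) ℂ) (h₁ : Fin q → ℂ) (h₂ : Fin p → ℂ) : ℝ :=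
  ‖star h₂ ⬝ᵥ W *ᵥ h₁‖ ^ 2 / (cnorm (Wᴴ *ᵥ h₂) ^ 2 + 1)

lemma norm_star_dotProduct_sq_le (u v : Fin q → ℂ) :
    ‖star u ⬝ᵥ v‖ ^ 2 ≤ cnorm u ^ 2 * cnorm v ^ 2 := by
  rw [← mul_pow]
  gcongr
  exact norm_star_dotProduct_le u v

theorem relaySNR_le {W : Matrix (Fin p) (Fin q) ℂ} {h₁ : Fin q → ℂ} (h₂ : Fin p → ℂ)
    (hW : relayPower W h₁ = 1) :
    relaySNR W h₁ h₂ ≤ cnorm h₁ ^ 2 * cnorm h₂ ^ 2 / (1 + cnorm h₁ ^ 2 + cnorm h₂ ^ 2) := by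
  set a := cnorm h₁ ^ 2
  set b := cnorm h₂ ^ 2
  set u := cnorm (W *ᵥ h₁) ^ 2
  set t := cnorm (Wᴴ *ᵥ h₂) ^ 2
  set s := ‖star h₂ ⬝ᵥ W *ᵥ h₁‖ ^ 2
  have hs_u : s ≤ b * u := norm_star_dotProduct_sq_le h₂ (W *ᵥ h₁)
  have hs_t : s ≤ t * a := by
    have hswap : star h₂ ⬝ᵥ W *ᵥ h₁ = star (Wᴴ *ᵥ h₂) ⬝ᵥ h₁ := by
      rw [star_mulVec, conjTranspose_conjTranspose, dotProduct_mulVec]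
    simpa only [s, hswap] using norm_star_dotProduct_sq_le (Wᴴ *ᵥ h₂) h₁
  have hu : u * (1 + a) ≤ a := by
    have := cnorm_mulVec_sq_le W h₁
    rw [show frobSq W = 1 - u by unfold relayPower at hW; linarith] at this
    linarith
  have ha : 0 ≤ a := sq_nonneg _
  have hb : 0 ≤ b := sq_nonneg _
  rw [relaySNR, div_le_div_iff₀ (by positivity) (by positivity)]
  calc s * (1 + a + b) = s * (1 + a) + s * b := by ring
    _ ≤ b * u * (1 + a) + t * a * b := by gcongr
    _ = b * (u * (1 + a)) + t * a * b := by ring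
    _ ≤ b * a + t * a * b := by gcongr
    _ = a * b * (t + 1) := by ring

section RankOneRelay

variable {h₁ : Fin q → ℂ} {h₂ : Fin p → ℂ}

theorem relayPower_smul_vecMulVec (c : ℂ) (hh₁ : h₁ ≠ 0) (hh₂ : h₂ ≠ 0) :
    relayPower (c • vecMulVec ((cnorm h₂ : ℂ)⁻¹ • h₂) (star ((cnorm h₁ : ℂ)⁻¹ • h₁))) h₁ =
      ‖c‖ ^ 2 * (cnorm h₁ ^ 2 + 1) := by
  rw [relayPower, smul_vecMulVec_star_mulVec, star_inv_smul_self_dotProduct, cnorm_smul,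
    cnorm_inv_smul_self hh₂, frobSq_smul_vecMulVec, cnorm_star, cnorm_inv_smul_self hh₁,
    cnorm_inv_smul_self hh₂, norm_mul, Complex.norm_real, Real.norm_of_nonneg (cnorm_nonneg h₁)]
  ring

theorem relaySNR_smul_vecMulVec (c : ℂ) (hh₁ : h₁ ≠ 0) :
    relaySNR (c • vecMulVec ((cnorm h₂ : ℂ)⁻¹ • h₂) (star ((cnorm h₁ : ℂ)⁻¹ • h₁))) h₁ h₂ =
      ‖c‖ ^ 2 * cnorm h₁ ^ 2 * cnorm h₂ ^ 2 / (‖c‖ ^ 2 * cnorm h₂ ^ 2 + 1) := by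
  rw [relaySNR, smul_vecMulVec_star_mulVec, star_inv_smul_self_dotProduct, dotProduct_smul,
    star_dotProduct_inv_smul_self, conjTranspose_smul_vecMulVec_star, smul_vecMulVec_star_mulVec,
    star_inv_smul_self_dotProduct, cnorm_smul, cnorm_inv_smul_self hh₁, smul_eq_mul,
    norm_mul, norm_mul, norm_mul, norm_star, Complex.norm_real, Complex.norm_real,
    Real.norm_of_nonneg (cnorm_nonneg h₁), Real.norm_of_nonneg (cnorm_nonneg h₂)]
  ring

end RankOneRelay

end

theorem stmt3_general (n : ℕ) (h₁ h₂ : Fin n → ℂ) (hh₁ : h₁ ≠ 0) (hh₂ : h₂ ≠ 0)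
    (W₀ : Matrix (Fin n) (Fin n) ℂ)
    (hW₀ : W₀ = ((Real.sqrt (1 + cnorm h₁ ^ 2))⁻¹ : ℂ) •
      Matrix.vecMulVec (((cnorm h₂ : ℂ))⁻¹ • h₂) (star (((cnorm h₁ : ℂ))⁻¹ • h₁))) :
    (sSup {x : ℝ | ∃ W : Matrix (Fin n) (Fin n) ℂ,
        cnorm (W.mulVec h₁) ^ 2 + frobSq W = 1 ∧
        x = ‖dotProduct (star h₂) (W.mulVec h₁)‖ ^ 2 /
            (cnorm ((W.conjTranspose).mulVec h₂) ^ 2 + 1)} =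
      cnorm h₁ ^ 2 * cnorm h₂ ^ 2 / (1 + cnorm h₁ ^ 2 + cnorm h₂ ^ 2)) ∧
    (cnorm (W₀.mulVec h₁) ^ 2 + frobSq W₀ = 1) ∧
    (‖dotProduct (star h₂) (W₀.mulVec h₁)‖ ^ 2 /
        (cnorm ((W₀.conjTranspose).mulVec h₂) ^ 2 + 1) =
      cnorm h₁ ^ 2 * cnorm h₂ ^ 2 / (1 + cnorm h₁ ^ 2 + cnorm h₂ ^ 2)) := by
  have hc : ‖((Real.sqrt (1 + cnorm h₁ ^ 2))⁻¹ : ℂ)‖ ^ 2 * (cnorm h₁ ^ 2 + 1) = 1 := by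
    rw [norm_inv, Complex.norm_real, Real.norm_of_nonneg (Real.sqrt_nonneg _), inv_pow,
      Real.sq_sqrt (by positivity), add_comm, inv_mul_cancel₀ (by positivity)]
  have hpow : relayPower W₀ h₁ = 1 := by rw [hW₀, relayPower_smul_vecMulVec _ hh₁ hh₂, hc]
  have hsnr : relaySNR W₀ h₁ h₂ =
      cnorm h₁ ^ 2 * cnorm h₂ ^ 2 / (1 + cnorm h₁ ^ 2 + cnorm h₂ ^ 2) := by
    rw [hW₀, relaySNR_smul_vecMulVec _ hh₁, div_eq_div_iff (by positivity) (by positivity)]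
    linear_combination cnorm h₁ ^ 2 * cnorm h₂ ^ 2 * hc
  refine ⟨IsGreatest.csSup_eq ⟨⟨W₀, hpow, hsnr.symm⟩, ?_⟩, hpow, hsnr⟩
  rintro _ ⟨W, hW, rfl⟩
  exact relaySNR_le h₂ hW

/-- For nonzero `h₁, h₂ ∈ ℂ^n`, the supremum of `|h₂ᴴWh₁|² / (‖Wᴴh₂‖² + 1)` over
matrices `W` with `‖Wh₁‖² + ‖W‖_F² = 1` equals `‖h₁‖²‖h₂‖² / (1 + ‖h₁‖² + ‖h₂‖²)`, and
it is attained by the rank-one matrix `W₀ = (1 + ‖h₁‖²)^{-1/2} ĥ₂ ĥ₁ᴴ`. -/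
theorem stmt3 (n : ℕ) (hn : 1 ≤ n) (h₁ h₂ : Fin n → ℂ) (hh₁ : h₁ ≠ 0) (hh₂ : h₂ ≠ 0)
    (W₀ : Matrix (Fin n) (Fin n) ℂ)
    (hW₀ : W₀ = ((Real.sqrt (1 + cnorm h₁ ^ 2))⁻¹ : ℂ) •
      Matrix.vecMulVec (((cnorm h₂ : ℂ))⁻¹ • h₂) (star (((cnorm h₁ : ℂ))⁻¹ • h₁))) :
    (sSup {x : ℝ | ∃ W : Matrix (Fin n) (Fin n) ℂ,
        cnorm (W.mulVec h₁) ^ 2 + frobSq W = 1 ∧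
        x = ‖dotProduct (star h₂) (W.mulVec h₁)‖ ^ 2 /
            (cnorm ((W.conjTranspose).mulVec h₂) ^ 2 + 1)} =
      cnorm h₁ ^ 2 * cnorm h₂ ^ 2 / (1 + cnorm h₁ ^ 2 + cnorm h₂ ^ 2)) ∧
    (cnorm (W₀.mulVec h₁) ^ 2 + frobSq W₀ = 1) ∧
    (‖dotProduct (star h₂) (W₀.mulVec h₁)‖ ^ 2 /
        (cnorm ((W₀.conjTranspose).mulVec h₂) ^ 2 + 1) =
      cnorm h₁ ^ 2 * cnorm h₂ ^ 2 / (1 + cnorm h₁ ^ 2 + cnorm h₂ ^ 2)) :=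
  stmt3_general n h₁ h₂ hh₁ hh₂ W₀ hW₀
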